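/- Let ω = e^{2πi/3}, m ≥ 1, and consider the three-state Fourier walk on the cycle C_{3m} with coin A_F = (1/√3)[[1,1,1],[1,ω,ω²],[1,ω²,ω]] (with positions taken mod 3m). The function Ψ(x) = (ω^x φ₁, -(ω^{x+1}φ₁ + φ₃), φ₃) for x ∈ ℤ/3mℤ satisfies the eigenvalue equation U_{A_F}^{C_{3m}}Ψ = iΨ on the cycle, and for φ₁ = ω, φ₃ = ω² the stationary measure μ(x) = 2(2 + Re(ω^x)) on the cycle has period 3. -/

import Mathlib

open Complex Matrix Finset

noncomputable def ω : ℂ := Complex.exp (2 * Real.pi * Complex.I / 3)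

noncomputable def fourierMatrix : Matrix (Fin 3) (Fin 3) ℂ :=
  (1 / Real.sqrt 3 : ℂ) • !![1, 1, 1; 1, ω, ω ^ 2; 1, ω ^ 2, ω]

noncomputable def walkCycle (N : ℕ) (A : Matrix (Fin 3) (Fin 3) ℂ)
    (Ψ : ZMod N → Fin 3 → ℂ) : ZMod N → Fin 3 → ℂ :=
  fun x => ![∑ j, A 0 j * Ψ (x + 1) j, ∑ j, A 1 j * Ψ x j, ∑ j, A 2 j * Ψ (x - 1) j]

/-!
Write `Ψ(x) = (c φ₁, -(c ω φ₁ + φ₃), φ₃)` with `c = ω^x`; the shifts `x ↦ x ± 1` multiply `c`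
by `ω^{±1}`. Each row of the walk then reduces to the identity
`ω - ω² = i√3` together with `ω³ = 1`. Since `3 ∣ 3m`, `x ↦ ω^x` is a character of `ℤ/3mℤ`
that is trivial on `3`, so `Ψ` itself is `3`-periodic.
-/

theorem ω_pow_three : ω ^ 3 = 1 := by
  simpa [ω] using (Complex.isPrimitiveRoot_exp 3 (by norm_num)).pow_eq_one

theorem ω_eq : ω = -1 / 2 + (Real.sqrt 3 / 2 : ℝ) * I := by
  have h : 2 * (Real.pi : ℂ) * I / 3 = (Real.pi - Real.pi / 3 : ℝ) * I := by push_cast; ring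
  rw [ω, h, exp_mul_I, ← ofReal_cos, ← ofReal_sin, Real.cos_pi_sub, Real.sin_pi_sub,
    Real.cos_pi_div_three, Real.sin_pi_div_three]
  push_cast
  ring

theorem ω_sub_ω_sq : ω - ω ^ 2 = I * Real.sqrt 3 := by
  have hsqrt : ((Real.sqrt 3 : ℝ) : ℂ) ^ 2 = 3 := by
    rw [← ofReal_pow, Real.sq_sqrt (by norm_num)]
    norm_num
  rw [ω_eq]
  push_cast
  linear_combination (-I ^ 2 / 4) * hsqrt + (-3 / 4 : ℂ) * I_sq

section Character

variable {N : ℕ} [NeZero N]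

theorem ω_pow_val_add_natCast (hN : 3 ∣ N) (x : ZMod N) (k : ℕ) :
    ω ^ (x + k).val = ω ^ x.val * ω ^ k := by
  have hω : ω ^ N = 1 := by
    obtain ⟨m, rfl⟩ := hN
    rw [pow_mul, ω_pow_three, one_pow]
  rw [← AddChar.zmodChar_apply hω, AddChar.map_add_eq_mul, AddChar.zmodChar_apply,
    AddChar.zmodChar_apply']

theorem ω_pow_val_add_one (hN : 3 ∣ N) (x : ZMod N) : ω ^ (x + 1).val = ω ^ x.val * ω := by
  simpa using ω_pow_val_add_natCast hN x 1

theorem ω_pow_val_sub_one (hN : 3 ∣ N) (x : ZMod N) :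
    ω ^ (x - 1).val = ω ^ x.val * ω ^ 2 := by
  have h := ω_pow_val_add_one hN (x - 1)
  rw [sub_add_cancel] at h
  linear_combination (-ω ^ (x - 1).val) * ω_pow_three + ω ^ 2 * h.symm

theorem ω_pow_val_add_three (hN : 3 ∣ N) (x : ZMod N) : ω ^ (x + 3).val = ω ^ x.val := by
  simpa [ω_pow_three] using ω_pow_val_add_natCast hN x 3

end Character

noncomputable def fourierAmplitude (c φ₁ φ₃ : ℂ) : Fin 3 → ℂ :=
  ![c * φ₁, -(c * ω * φ₁ + φ₃), φ₃]

theorem fourierMatrix_mulVec (v : Fin 3 → ℂ) :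
    fourierMatrix *ᵥ v = (1 / Real.sqrt 3 : ℂ) •
      ![v 0 + v 1 + v 2, v 0 + ω * v 1 + ω ^ 2 * v 2, v 0 + ω ^ 2 * v 1 + ω * v 2] := by
  ext i
  fin_cases i <;> simp [fourierMatrix, mulVec, dotProduct, Fin.sum_univ_three] <;> ring

section Rows

variable (c φ₁ φ₃ : ℂ)

theorem fourierMatrix_mulVec_fourierAmplitude_zero :
    (fourierMatrix *ᵥ fourierAmplitude (c * ω) φ₁ φ₃) 0 = I * fourierAmplitude c φ₁ φ₃ 0 := by
  simp only [fourierMatrix_mulVec, fourierAmplitude, Pi.smul_apply, smul_eq_mul, cons_val_zero,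
    cons_val_one, Matrix.cons_val]
  field_simp
  linear_combination (c * φ₁) * ω_sub_ω_sq

theorem fourierMatrix_mulVec_fourierAmplitude_one :
    (fourierMatrix *ᵥ fourierAmplitude c φ₁ φ₃) 1 = I * fourierAmplitude c φ₁ φ₃ 1 := by
  simp only [fourierMatrix_mulVec, fourierAmplitude, Pi.smul_apply, smul_eq_mul, cons_val_zero,
    cons_val_one, Matrix.cons_val]
  field_simp
  linear_combination (-(c * ω * φ₁ + φ₃)) * ω_sub_ω_sq + (-(c * φ₁)) * ω_pow_three

theorem fourierMatrix_mulVec_fourierAmplitude_two :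
    (fourierMatrix *ᵥ fourierAmplitude (c * ω ^ 2) φ₁ φ₃) 2 = I * fourierAmplitude c φ₁ φ₃ 2 := by
  simp only [fourierMatrix_mulVec, fourierAmplitude, Pi.smul_apply, smul_eq_mul, cons_val_zero,
    cons_val_one, Matrix.cons_val]
  field_simp
  linear_combination φ₃ * ω_sub_ω_sq + (-(c * ω ^ 2 * φ₁)) * ω_pow_three

end Rows

theorem walkCycle_apply (N : ℕ) (A : Matrix (Fin 3) (Fin 3) ℂ) (Ψ : ZMod N → Fin 3 → ℂ)
    (x : ZMod N) :
    walkCycle N A Ψ x = ![(A *ᵥ Ψ (x + 1)) 0, (A *ᵥ Ψ x) 1, (A *ᵥ Ψ (x - 1)) 2] :=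
  rfl

theorem walkCycle_fourierMatrix_fourierAmplitude {N : ℕ} [NeZero N] (hN : 3 ∣ N) (φ₁ φ₃ : ℂ) :
    walkCycle N fourierMatrix (fun x => fourierAmplitude (ω ^ x.val) φ₁ φ₃) =
      fun x i => I * fourierAmplitude (ω ^ x.val) φ₁ φ₃ i := by
  funext x i
  rw [walkCycle_apply, ω_pow_val_add_one hN, ω_pow_val_sub_one hN]
  fin_cases i
  · exact fourierMatrix_mulVec_fourierAmplitude_zero ..
  · exact fourierMatrix_mulVec_fourierAmplitude_one ..
  · exact fourierMatrix_mulVec_fourierAmplitude_two ..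

theorem fourier_cycle_stationary (m : ℕ) (hm : 1 ≤ m) :
    (∀ φ₁ φ₃ : ℂ, ∀ Ψ : ZMod (3 * m) → Fin 3 → ℂ,
      (Ψ = fun x => ![ω ^ x.val * φ₁, -(ω ^ (x.val + 1) * φ₁ + φ₃), φ₃]) →
      walkCycle (3 * m) fourierMatrix Ψ = fun x i => Complex.I * Ψ x i) ∧
    (∀ Ψ : ZMod (3 * m) → Fin 3 → ℂ,
      (Ψ = fun x => ![ω ^ x.val * ω, -(ω ^ (x.val + 1) * ω + ω ^ 2), ω ^ 2]) →
      ∀ x : ZMod (3 * m), ∑ i, ‖Ψ (x + 3) i‖ ^ 2 = ∑ i, ‖Ψ x i‖ ^ 2) := by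
  have : NeZero (3 * m) := ⟨by omega⟩
  have hN : 3 ∣ 3 * m := dvd_mul_right 3 m
  have hΨ (φ₁ φ₃ : ℂ) :
      (fun x : ZMod (3 * m) => ![ω ^ x.val * φ₁, -(ω ^ (x.val + 1) * φ₁ + φ₃), φ₃]) =
        fun x => fourierAmplitude (ω ^ x.val) φ₁ φ₃ := by
    simp only [fourierAmplitude, pow_succ]
  refine ⟨fun φ₁ φ₃ Ψ h => ?_, fun Ψ h x => ?_⟩
  · rw [h, hΨ]
    exact walkCycle_fourierMatrix_fourierAmplitude hN φ₁ φ₃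
  · simp only [h, hΨ, ω_pow_val_add_three hN]
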